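/- arXiv:1910.01120 — 6 statements merged into one kernel-verified Lean document; each statement's English description precedes it below -/
import Mathlib

section
/- If A is a nonnegative irreducible real n×n matrix with n ≥ 1, then every entry of the matrix (I + A)^{n−1} is strictly positive. -/
open Matrix

theorem one_add_irreducible_pow_pred_pos {n : ℕ} (hn : 1 ≤ n)
    (A : Matrix (Fin n) (Fin n) ℝ)
    (hA : ∀ i j, 0 ≤ A i j)
    (hirr : ∀ i j, ∃ k : ℕ, 1 ≤ k ∧ 0 < (A ^ k) i j) :
    ∀ i j, 0 < ((1 + A) ^ (n - 1)) i j := by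
  set B : Matrix (Fin n) (Fin n) ℝ := 1 + A with hBdef
  have hB0 : ∀ i j, 0 ≤ B i j := by
    intro i j
    simp only [hBdef, Matrix.add_apply, Matrix.one_apply]
    split <;> linarith [hA i j]
  have hBd : ∀ j, 0 < B j j := by
    intro j
    simp only [hBdef, Matrix.add_apply, Matrix.one_apply_eq]
    linarith [hA j j]
  have hBpow : ∀ m i j, 0 ≤ (B ^ m) i j := by
    intro m
    induction m with
    | zero =>
      intro i j
      simp only [pow_zero, Matrix.one_apply]
      split <;> norm_num
    | succ m ih =>
      intro i j
      rw [pow_succ, Matrix.mul_apply]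
      exact Finset.sum_nonneg fun l _ => mul_nonneg (ih i l) (hB0 l j)
  have hApow : ∀ m i j, 0 ≤ (A ^ m) i j := by
    intro m
    induction m with
    | zero =>
      intro i j
      simp only [pow_zero, Matrix.one_apply]
      split <;> norm_num
    | succ m ih =>
      intro i j
      rw [pow_succ, Matrix.mul_apply]
      exact Finset.sum_nonneg fun l _ => mul_nonneg (ih i l) (hA l j)
  have hAB : ∀ i j, A i j ≤ B i j := by
    intro i j
    simp only [hBdef, Matrix.add_apply, Matrix.one_apply]
    split <;> linarith
  have hle : ∀ m i j, (A ^ m) i j ≤ (B ^ m) i j := by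
    intro m
    induction m with
    | zero => intro i j; simp
    | succ m ih =>
      intro i j
      rw [pow_succ, pow_succ, Matrix.mul_apply, Matrix.mul_apply]
      exact Finset.sum_le_sum fun l _ =>
        mul_le_mul (ih i l) (hAB l j) (hA l j) (hBpow m i l)
  have hmono1 : ∀ m i j, 0 < (B ^ m) i j → 0 < (B ^ (m + 1)) i j := by
    intro m i j h
    rw [pow_succ, Matrix.mul_apply]
    calc 0 < (B ^ m) i j * B j j := mul_pos h (hBd j)
      _ ≤ ∑ l, (B ^ m) i l * B l j :=
        Finset.single_le_sum (fun l _ => mul_nonneg (hBpow m i l) (hB0 l j))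
          (Finset.mem_univ j)
  intro i j
  -- positivity pattern of row i of B^m
  set f : ℕ → Finset (Fin n) := fun m => Finset.univ.filter (fun j => 0 < (B ^ m) i j)
    with hfdef
  have hmemf : ∀ m j, j ∈ f m ↔ 0 < (B ^ m) i j := by
    intro m j; simp [hfdef]
  have fsub : ∀ m, f m ⊆ f (m + 1) := by
    intro m j hj
    rw [hmemf] at *
    exact hmono1 m i j hj
  have fmono : ∀ a b, a ≤ b → f a ⊆ f b := by
    intro a b hab
    induction b, hab using Nat.le_induction with
    | base => exact subset_rfl
    | succ b hab ih => exact ih.trans (fsub b)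
  have hextract : ∀ m j, 0 < (B ^ (m + 1)) i j → ∃ l, 0 < (B ^ m) i l ∧ 0 < B l j := by
    intro m j h
    rw [pow_succ, Matrix.mul_apply] at h
    by_contra hc
    push_neg at hc
    have : ∑ l, (B ^ m) i l * B l j ≤ 0 := by
      apply Finset.sum_nonpos
      intro l _
      rcases lt_or_ge 0 ((B ^ m) i l) with hl | hl
      · have := hc l hl
        have hBl : B l j = 0 := le_antisymm this (hB0 l j)
        simp [hBl]
      · have : (B ^ m) i l = 0 := le_antisymm hl (hBpow m i l)
        simp [this]
    linarith
  have hstab : ∀ m, f (m + 1) = f m → ∀ d, f (m + d) = f m := by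
    intro m heq d
    induction d with
    | zero => rfl
    | succ d ih =>
      apply Finset.Subset.antisymm
      · intro j hj
        rw [hmemf] at hj
        have : m + (d + 1) = (m + d) + 1 := by ring
        rw [this] at hj
        obtain ⟨l, hl1, hl2⟩ := hextract (m + d) j hj
        have hlm : l ∈ f m := by rw [← ih, hmemf]; exact hl1
        rw [hmemf] at hlm
        have : 0 < (B ^ (m + 1)) i j := by
          rw [pow_succ, Matrix.mul_apply]
          calc 0 < (B ^ m) i l * B l j := mul_pos hlm hl2
            _ ≤ ∑ t, (B ^ m) i t * B t j :=
              Finset.single_le_sum (fun t _ => mul_nonneg (hBpow m i t) (hB0 t j))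
                (Finset.mem_univ l)
        rw [← heq, hmemf]
        exact this
      · exact (fmono m (m + (d + 1)) (Nat.le_add_right _ _))
  have hsub : ∀ k, f k ⊆ f (n - 1) := by
    by_cases hst : ∃ m, m ≤ n - 1 ∧ f (m + 1) = f m
    · obtain ⟨m, hm, heq⟩ := hst
      intro k
      rcases le_total k (n - 1) with hk | hk
      · exact fmono k (n - 1) hk
      · have h1 : f k = f m := by
          have : k = m + (k - m) := by omega
          rw [this]; exact hstab m heq _
        rw [h1]
        exact fmono m (n - 1) hm
    · push_neg at hst
      have hcard : ∀ m, m ≤ n - 1 → m + 1 ≤ (f m).card := by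
        intro m
        induction m with
        | zero =>
          intro _
          have : i ∈ f 0 := by rw [hmemf]; simp
          have := Finset.card_pos.mpr ⟨i, this⟩
          omega
        | succ m ih =>
          intro hm
          have hm' : m ≤ n - 1 := by omega
          have h1 := ih hm'
          have hne := hst m hm'
          have hss : f m ⊂ f (m + 1) := (fsub m).ssubset_of_ne (Ne.symm hne)
          have := Finset.card_lt_card hss
          omega
      have huniv : f (n - 1) = Finset.univ := by
        apply Finset.eq_univ_of_card
        have h1 := hcard (n - 1) le_rfl
        have h2 : (f (n - 1)).card ≤ n := by
          simpa using Finset.card_le_card (Finset.subset_univ (f (n - 1)))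
        simp only [Fintype.card_fin]
        omega
      intro k
      rw [huniv]
      exact Finset.subset_univ _
  obtain ⟨k, _, hk⟩ := hirr i j
  have hj : j ∈ f k := by
    rw [hmemf]
    exact lt_of_lt_of_le hk (hle k i j)
  have := hsub k hj
  rw [hmemf] at this
  exact this
end

section
/- Let A be a nonnegative real n×n matrix with n ≥ 1. Then the spectral radius ρ(A) is an eigenvalue of A associated with a nonnegative eigenvector: there exists x ∈ ℝ^n with x ≥ 0, x ≠ 0, and A·x = ρ(A)·x. -/
open Matrix Polynomial

/-- The spectral radius of a real square matrix: the maximum modulus of the complex roots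
of its characteristic polynomial. -/
noncomputable def specRad {n : ℕ} (A : Matrix (Fin n) (Fin n) ℝ) : ℝ :=
  sSup {r : ℝ | ∃ μ : ℂ,
    μ ∈ (A.map (Complex.ofReal : ℝ → ℂ)).charpoly.roots ∧ ‖μ‖ = r}

/-!
Let `ρ = ρ(A)`. A complex eigenvector `v` for an eigenvalue of modulus `ρ` gives, by the triangle
inequality, a vector `u ≥ 0` in the standard simplex with `ρ u ≤ A u`. For `t > ρ` the Neumann
series `N = ∑ (A / t) ^ k` converges and is entrywise nonnegative, so `y = N u` solves
`y - (A / t) y = u`, and applying the monotone map `N` to `ρ u ≤ A u` gives `u ≤ (1 - ρ / t) y`.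
Hence `y` normalized to the simplex satisfies `‖A x - ρ x‖ ≤ t - ρ`. Letting `t ↓ ρ`, compactness of
the simplex produces an exact eigenvector.
-/

open scoped NNReal ENNReal in
theorem spectrum.summable_pow_inv_smul {A : Type*} [NormedRing A] [NormedAlgebra ℂ A]
    [CompleteSpace A] {a : A} {z : ℂ} (hz : spectralRadius ℂ a < ‖z‖₊) :
    Summable fun k : ℕ => (z⁻¹ • a) ^ k := by
  have hz0 : z ≠ 0 := by rintro rfl; simp at hz
  have hlt : (‖z⁻¹‖₊ : ℝ≥0∞) < (spectralRadius ℂ a)⁻¹ := by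
    rwa [nnnorm_inv, ENNReal.coe_inv (by simpa using hz0), ENNReal.inv_lt_inv]
  obtain ⟨r, hzr, hr⟩ := ENNReal.lt_iff_exists_nnreal_btwn.mp hlt
  have hr0 : 0 < r := pos_of_gt (ENNReal.coe_lt_coe.mp hzr)
  -- `w ↦ (1 - w • a)⁻¹` is analytic on the ball of radius `(spectralRadius ℂ a)⁻¹`, so its
  -- Taylor series `∑ w ^ k • a ^ k` converges on that whole ball.
  have hseries := (hasFPowerSeriesOnBall_inverse_one_sub_smul ℂ a).exchange_radius
    ((spectrum.differentiableOn_inverse_one_sub_smul hr).hasFPowerSeriesOnBall hr0)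
  have hmem : z⁻¹ ∈ Metric.eball (0 : ℂ) r := by
    simp only [Metric.mem_eball, edist_zero_right]; exact hzr
  simpa [ContinuousMultilinearMap.mkPiRing_apply, _root_.smul_pow] using
    (hseries.hasSum hmem).summable

theorem IsCompact.exists_eq_zero_of_forall_exists_norm_le {X E : Type*} [TopologicalSpace X]
    [NormedAddCommGroup E] {K : Set X} (hK : IsCompact K) {f : X → E} (hf : ContinuousOn f K)
    (h : ∀ ε > 0, ∃ x ∈ K, ‖f x‖ ≤ ε) : ∃ x ∈ K, f x = 0 := by
  obtain ⟨x₀, hx₀K, -⟩ := h 1 one_pos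
  obtain ⟨x, hxK, hmin⟩ := hK.exists_isMinOn ⟨x₀, hx₀K⟩ hf.norm
  refine ⟨x, hxK, norm_le_zero_iff.mp (le_of_forall_pos_le_add fun ε hε => ?_)⟩
  obtain ⟨y, hyK, hy⟩ := h ε hε
  linarith [isMinOn_iff.mp hmin y hyK]

namespace Matrix

variable {ι : Type*} [Fintype ι]

theorem mulVec_mono_of_nonneg {N : Matrix ι ι ℝ} (hN : ∀ i j, 0 ≤ N i j) {a b : ι → ℝ}
    (hab : a ≤ b) : N *ᵥ a ≤ N *ᵥ b :=
  fun i => Finset.sum_le_sum fun j _ => mul_le_mul_of_nonneg_left (hab j) (hN i j)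

theorem norm_smul_le_mulVec_norm {A : Matrix ι ι ℝ} (hA : ∀ i j, 0 ≤ A i j) {v : ι → ℂ} {μ : ℂ}
    (hv : A.map (Complex.ofReal : ℝ → ℂ) *ᵥ v = μ • v) :
    ‖μ‖ • (fun i => ‖v i‖) ≤ A *ᵥ fun i => ‖v i‖ := fun i => calc
  ‖μ‖ * ‖v i‖ = ‖∑ j, (A i j : ℂ) * v j‖ := by
    rw [← norm_mul, ← smul_eq_mul, ← Pi.smul_apply, ← hv]; rfl
  _ ≤ ∑ j, ‖(A i j : ℂ) * v j‖ := norm_sum_le _ _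
  _ = (A *ᵥ fun i => ‖v i‖) i := by
    simp only [norm_mul, Complex.norm_real, Real.norm_of_nonneg (hA i _)]; rfl

theorem exists_mem_stdSimplex_smul_le_mulVec {A : Matrix ι ι ℝ} {c : ℝ} {w : ι → ℝ}
    (hw0 : 0 ≤ w) (hw : w ≠ 0) (hcw : c • w ≤ A *ᵥ w) :
    ∃ u ∈ stdSimplex ℝ ι, c • u ≤ A *ᵥ u := by
  obtain ⟨i, hi⟩ := Function.ne_iff.mp hw
  have hs : 0 < ∑ i, w i :=
    Finset.sum_pos' (fun i _ => hw0 i) ⟨i, Finset.mem_univ i, (hw0 i).lt_of_ne' hi⟩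
  refine ⟨(∑ i, w i)⁻¹ • w, ⟨fun i => smul_nonneg (inv_nonneg.mpr hs.le) (hw0 i), ?_⟩, ?_⟩
  · simp only [Pi.smul_apply, smul_eq_mul, ← Finset.mul_sum]
    exact inv_mul_cancel₀ hs.ne'
  · rw [smul_comm, mulVec_smul]
    exact smul_le_smul_of_nonneg_left hcw (inv_nonneg.mpr hs.le)

variable [DecidableEq ι]

theorem exists_mulVec_eq_smul_of_mem_roots_charpoly {M : Matrix ι ι ℂ} {μ : ℂ}
    (hμ : μ ∈ M.charpoly.roots) : ∃ v ≠ 0, M *ᵥ v = μ • v := by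
  obtain ⟨v, hv0, hv⟩ := (exists_mulVec_eq_zero_iff (M := scalar ι μ - M)).mpr <| by
    rw [← eval_charpoly]; exact (mem_roots M.charpoly_monic.ne_zero).mp hμ
  refine ⟨v, hv0, ?_⟩
  rw [sub_mulVec, sub_eq_zero] at hv
  simpa [scalar_apply, mulVec_diagonal, funext_iff] using hv.symm

theorem exists_mem_stdSimplex_norm_smul_le_mulVec {A : Matrix ι ι ℝ} (hA : ∀ i j, 0 ≤ A i j)
    {μ : ℂ} (hμ : μ ∈ (A.map (Complex.ofReal : ℝ → ℂ)).charpoly.roots) :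
    ∃ u ∈ stdSimplex ℝ ι, ‖μ‖ • u ≤ A *ᵥ u := by
  obtain ⟨v, hv0, hv⟩ := exists_mulVec_eq_smul_of_mem_roots_charpoly hμ
  exact exists_mem_stdSimplex_smul_le_mulVec (fun i => norm_nonneg (v i))
    (fun h => hv0 (funext fun i => norm_eq_zero.mp (congrFun h i)))
    (norm_smul_le_mulVec_norm hA hv)

theorem tsum_pow_apply_nonneg {X : Matrix ι ι ℝ} (hX : ∀ i j, 0 ≤ X i j)
    (hsum : Summable (X ^ ·)) (i j : ι) : 0 ≤ (∑' k, X ^ k) i j :=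
  (Pi.hasSum.mp (Pi.hasSum.mp hsum.hasSum i) j).nonneg fun k => pow_apply_nonneg hX k i j

theorem exists_mem_stdSimplex_norm_mulVec_sub_smul_le_one_sub {X : Matrix ι ι ℝ}
    (hX : ∀ i j, 0 ≤ X i j) (hsum : Summable (X ^ ·)) {r : ℝ} {u : ι → ℝ}
    (hu : u ∈ stdSimplex ℝ ι) (hXu : r • u ≤ X *ᵥ u) :
    ∃ x ∈ stdSimplex ℝ ι, ‖X *ᵥ x - r • x‖ ≤ 1 - r := by
  set N := ∑' k, X ^ k
  have hN := tsum_pow_apply_nonneg hX hsum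
  set y := N *ᵥ u
  have hy : y - X *ᵥ y = u := calc
    y - X *ᵥ y = (1 - X) *ᵥ y := by rw [sub_mulVec, one_mulVec]
    _ = u := by rw [mulVec_mulVec, hsum.one_sub_mul_tsum_pow, one_mulVec]
  have huy : u ≤ (1 - r) • y := calc
    u = N *ᵥ ((1 - X) *ᵥ u) := by rw [mulVec_mulVec, hsum.tsum_pow_mul_one_sub, one_mulVec]
    _ ≤ N *ᵥ ((1 - r) • u) := mulVec_mono_of_nonneg hN (by
        rw [sub_mulVec, one_mulVec, sub_smul, one_smul]; exact sub_le_sub_left hXu u)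
    _ = (1 - r) • y := mulVec_smul N (1 - r) u
  have hy0 : 0 ≤ y := by
    simpa using mulVec_mono_of_nonneg hN (show 0 ≤ u from hu.1)
  set s := ∑ i, y i
  have hs : 1 ≤ (1 - r) * s := calc
    1 = ∑ i, u i := hu.2.symm
    _ ≤ ∑ i, ((1 - r) • y) i := Finset.sum_le_sum fun i _ => huy i
    _ = (1 - r) * s := by simp only [Pi.smul_apply, smul_eq_mul, ← Finset.mul_sum, s]
  have hr : 0 < 1 - r :=
    pos_of_mul_pos_left (one_pos.trans_le hs) (Finset.sum_nonneg fun i _ => hy0 i)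
  have hs0 : 0 < s := pos_of_mul_pos_right (one_pos.trans_le hs) hr.le
  have hsinv : s⁻¹ ≤ 1 - r := by rwa [inv_le_iff_one_le_mul₀ hs0]
  have hx : s⁻¹ • y ∈ stdSimplex ℝ ι := by
    refine ⟨fun i => smul_nonneg (inv_nonneg.mpr hs0.le) (hy0 i), ?_⟩
    simp only [Pi.smul_apply, smul_eq_mul, ← Finset.mul_sum]
    exact inv_mul_cancel₀ hs0.ne'
  have hXx : X *ᵥ (s⁻¹ • y) - r • (s⁻¹ • y) = (1 - r) • (s⁻¹ • y) - s⁻¹ • u := by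
    rw [mulVec_smul, ← hy]
    module
  refine ⟨s⁻¹ • y, hx, ?_⟩
  rw [hXx]
  refine (pi_norm_le_iff_of_nonneg hr.le).mpr fun i => ?_
  obtain ⟨hxi0, hxi1⟩ := mem_Icc_of_mem_stdSimplex hx i
  obtain ⟨hui0, hui1⟩ := mem_Icc_of_mem_stdSimplex hu i
  simp only [Pi.sub_apply, Pi.smul_apply, smul_eq_mul, Real.norm_eq_abs, abs_sub_le_iff]
    at hxi0 hxi1 ⊢
  constructor <;> nlinarith [inv_nonneg.mpr hs0.le]

theorem exists_mem_stdSimplex_norm_mulVec_sub_smul_le_sub {A : Matrix ι ι ℝ}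
    (hA : ∀ i j, 0 ≤ A i j) {ρ t : ℝ} (ht : 0 < t) (hsum : Summable fun k : ℕ => (t⁻¹ • A) ^ k)
    {u : ι → ℝ} (hu : u ∈ stdSimplex ℝ ι) (hAu : ρ • u ≤ A *ᵥ u) :
    ∃ x ∈ stdSimplex ℝ ι, ‖A *ᵥ x - ρ • x‖ ≤ t - ρ := by
  have hXu : (t⁻¹ * ρ) • u ≤ (t⁻¹ • A) *ᵥ u := by
    rw [mul_smul, smul_mulVec]
    exact smul_le_smul_of_nonneg_left hAu (inv_nonneg.mpr ht.le)
  obtain ⟨x, hx, hle⟩ := exists_mem_stdSimplex_norm_mulVec_sub_smul_le_one_sub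
    (fun i j => mul_nonneg (inv_nonneg.mpr ht.le) (hA i j)) hsum hu hXu
  refine ⟨x, hx, ?_⟩
  have hscale : A *ᵥ x - ρ • x = t • ((t⁻¹ • A) *ᵥ x - (t⁻¹ * ρ) • x) := by
    rw [smul_mulVec, smul_sub, smul_smul, smul_smul, mul_inv_cancel_left₀ ht.ne',
      mul_inv_cancel₀ ht.ne', one_smul]
  calc ‖A *ᵥ x - ρ • x‖ = t * ‖(t⁻¹ • A) *ᵥ x - (t⁻¹ * ρ) • x‖ := by
        rw [hscale, norm_smul, Real.norm_of_nonneg ht.le]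
    _ ≤ t * (1 - t⁻¹ * ρ) := mul_le_mul_of_nonneg_left hle ht.le
    _ = t - ρ := by field_simp

end Matrix

section SpecRad

variable {n : ℕ}

theorem specRad_nonneg (A : Matrix (Fin n) (Fin n) ℝ) : 0 ≤ specRad A :=
  Real.sSup_nonneg (by rintro _ ⟨μ, -, rfl⟩; exact norm_nonneg μ)

theorem finite_setOf_norm_mem_roots (A : Matrix (Fin n) (Fin n) ℝ) :
    {r : ℝ | ∃ μ : ℂ, μ ∈ (A.map (Complex.ofReal : ℝ → ℂ)).charpoly.roots ∧ ‖μ‖ = r}.Finite :=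
  (Multiset.finite_toSet _).image (‖·‖)

theorem norm_le_specRad {A : Matrix (Fin n) (Fin n) ℝ} {μ : ℂ}
    (hμ : μ ∈ (A.map (Complex.ofReal : ℝ → ℂ)).charpoly.roots) : ‖μ‖ ≤ specRad A :=
  le_csSup (finite_setOf_norm_mem_roots A).bddAbove ⟨μ, hμ, rfl⟩

theorem exists_mem_roots_norm_eq_specRad (hn : 1 ≤ n) (A : Matrix (Fin n) (Fin n) ℝ) :
    ∃ μ ∈ (A.map (Complex.ofReal : ℝ → ℂ)).charpoly.roots, ‖μ‖ = specRad A := by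
  obtain ⟨μ, hμ⟩ := IsAlgClosed.exists_root (A.map (Complex.ofReal : ℝ → ℂ)).charpoly
    (by rw [charpoly_degree_eq_dim, Fintype.card_fin]; exact_mod_cast (by omega : n ≠ 0))
  have hne : {r : ℝ | ∃ μ : ℂ,
      μ ∈ (A.map (Complex.ofReal : ℝ → ℂ)).charpoly.roots ∧ ‖μ‖ = r}.Nonempty :=
    ⟨‖μ‖, μ, (mem_roots (charpoly_monic _).ne_zero).mpr hμ, rfl⟩
  exact hne.csSup_mem (finite_setOf_norm_mem_roots A)

theorem spectralRadius_map_ofReal_le_specRad (A : Matrix (Fin n) (Fin n) ℝ) :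
    spectralRadius ℂ (A.map (Complex.ofReal : ℝ → ℂ)) ≤ ENNReal.ofReal (specRad A) := by
  refine iSup₂_le fun μ hμ => ?_
  rw [← enorm_eq_nnnorm, ← ofReal_norm]
  exact ENNReal.ofReal_le_ofReal <| norm_le_specRad <|
    (mem_roots (charpoly_monic _).ne_zero).mpr (mem_spectrum_iff_isRoot_charpoly.mp hμ)

section

attribute [local instance] Matrix.linftyOpNormedRing Matrix.linftyOpNormedAlgebra

theorem summable_pow_inv_smul_of_specRad_lt {A : Matrix (Fin n) (Fin n) ℝ} {t : ℝ}
    (ht : specRad A < t) : Summable fun k : ℕ => (t⁻¹ • A) ^ k := by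
  have hlt : spectralRadius ℂ (A.map (Complex.ofReal : ℝ → ℂ)) < ‖(t : ℂ)‖₊ := by
    refine (spectralRadius_map_ofReal_le_specRad A).trans_lt ?_
    rw [← enorm_eq_nnnorm, ← ofReal_norm, Complex.norm_real, Real.norm_of_nonneg
      ((specRad_nonneg A).trans ht.le)]
    exact (ENNReal.ofReal_lt_ofReal_iff_of_nonneg (specRad_nonneg A)).mpr ht
  have hmap : ∀ k : ℕ, ((t : ℂ)⁻¹ • A.map (Complex.ofReal : ℝ → ℂ)) ^ k =
      ((t⁻¹ • A) ^ k).map Complex.ofRealHom := fun k => by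
    rw [Matrix.map_pow]
    congr 1
    ext i j
    simp
  have hsum := spectrum.summable_pow_inv_smul hlt
  simp only [hmap] at hsum
  refine Pi.summable.mpr fun i => Pi.summable.mpr fun j => Complex.summable_ofReal.mp ?_
  exact Pi.summable.mp (Pi.summable.mp hsum i) j

end

end SpecRad

theorem perron_frobenius_weak {n : ℕ} (hn : 1 ≤ n) (A : Matrix (Fin n) (Fin n) ℝ)
    (hA : ∀ i j, 0 ≤ A i j) :
    ∃ x : Fin n → ℝ, (∀ i, 0 ≤ x i) ∧ x ≠ 0 ∧ A.mulVec x = specRad A • x := by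
  obtain ⟨μ, hμ, hμρ⟩ := exists_mem_roots_norm_eq_specRad hn A
  obtain ⟨u, hu, hAu⟩ := exists_mem_stdSimplex_norm_smul_le_mulVec hA hμ
  rw [hμρ] at hAu
  have happrox : ∀ ε > 0, ∃ x ∈ stdSimplex ℝ (Fin n), ‖A *ᵥ x - specRad A • x‖ ≤ ε :=
    fun ε hε => by
      simpa using exists_mem_stdSimplex_norm_mulVec_sub_smul_le_sub hA
        (by linarith [specRad_nonneg A]) (summable_pow_inv_smul_of_specRad_lt
          (lt_add_of_pos_right _ hε)) hu hAu
  obtain ⟨x, hx, hx0⟩ := (isCompact_stdSimplex ℝ (Fin n)).exists_eq_zero_of_forall_exists_norm_le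
    (by fun_prop) happrox
  exact ⟨x, hx.1, fun h => by simpa [h] using hx.2, sub_eq_zero.mp hx0⟩
end

section
/- Let A be a nonnegative irreducible real n×n matrix with n ≥ 1. If x ∈ ℝ^n satisfies x ≥ 0, x ≠ 0 and A·x = λ·x for some real number λ, then x > 0 (all coordinates of x are strictly positive) and λ > 0. -/
open Matrix

theorem nonneg_eigenvector_of_irreducible_is_positive {n : ℕ} (hn : 1 ≤ n)
    (A : Matrix (Fin n) (Fin n) ℝ)
    (hA : ∀ i j, 0 ≤ A i j)
    (hirr : ∀ i j, ∃ k : ℕ, 1 ≤ k ∧ 0 < (A ^ k) i j)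
    (x : Fin n → ℝ) (hx : ∀ i, 0 ≤ x i) (hx0 : x ≠ 0)
    (lam : ℝ) (hlam : A.mulVec x = lam • x) :
    (∀ i, 0 < x i) ∧ 0 < lam := by
  -- A^k is entrywise nonnegative
  have hAk : ∀ k : ℕ, ∀ i j, 0 ≤ (A ^ k) i j := by
    intro k
    induction k with
    | zero => intro i j; by_cases h : i = j <;> simp [pow_zero, Matrix.one_apply, h]
    | succ m ih =>
      intro i j
      rw [pow_succ, Matrix.mul_apply]
      exact Finset.sum_nonneg fun m' _ => mul_nonneg (ih i m') (hA m' j)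
  -- A^k x = lam^k x
  have hpow : ∀ k : ℕ, (A ^ k).mulVec x = lam ^ k • x := by
    intro k
    induction k with
    | zero => simp
    | succ m ih =>
      rw [pow_succ, ← Matrix.mulVec_mulVec, hlam, Matrix.mulVec_smul, ih,
        smul_smul, pow_succ, mul_comm]
  -- some coordinate of x is positive
  obtain ⟨j, hj⟩ : ∃ j, 0 < x j := by
    by_contra h
    push_neg at h
    exact hx0 (funext fun i => le_antisymm (h i) (hx i))
  -- key: for every i, lam^k * x i > 0 for some k ≥ 1
  have key : ∀ i, ∃ k : ℕ, 1 ≤ k ∧ 0 < lam ^ k * x i := by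
    intro i
    obtain ⟨k, hk1, hk⟩ := hirr i j
    refine ⟨k, hk1, ?_⟩
    have := congrFun (hpow k) i
    simp only [Matrix.mulVec, dotProduct, Pi.smul_apply, smul_eq_mul] at this
    rw [← this]
    have : (A ^ k) i j * x j ≤ ∑ m, (A ^ k) i m * x m :=
      Finset.single_le_sum (f := fun m => (A ^ k) i m * x m)
        (fun m _ => mul_nonneg (hAk k i m) (hx m)) (Finset.mem_univ j)
    exact lt_of_lt_of_le (mul_pos hk hj) this
  -- x i > 0 for all i
  have hxpos : ∀ i, 0 < x i := by
    intro i
    obtain ⟨k, _, hk⟩ := key i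
    rcases (hx i).lt_or_eq with h | h
    · exact h
    · rw [← h] at hk; simp at hk
  -- lam ≥ 0
  have hlam0 : 0 ≤ lam := by
    have := congrFun hlam j
    simp only [Matrix.mulVec, dotProduct, Pi.smul_apply, smul_eq_mul] at this
    have hs : 0 ≤ ∑ m, A j m * x m :=
      Finset.sum_nonneg fun m _ => mul_nonneg (hA j m) (hx m)
    rw [this] at hs
    exact nonneg_of_mul_nonneg_right (mul_comm lam (x j) ▸ hs) hj
  -- lam > 0
  refine ⟨hxpos, ?_⟩
  rcases hlam0.lt_or_eq with h | h
  · exact h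
  · obtain ⟨k, hk1, hk⟩ := key j
    rw [← h, zero_pow (by omega), zero_mul] at hk
    exact absurd hk (lt_irrefl 0)
end

section
/- Let A be a nonnegative irreducible real n×n matrix with n ≥ 1. Then ρ(A) is a simple root of the characteristic polynomial of A, i.e. the multiplicity of ρ(A) as a root of the characteristic polynomial of A is exactly one. -/
/-!
For a nonnegative irreducible `A`, some power `(1 + A) ^ m` is entrywise positive. By Gelfand's
formula, no positive vector `u` satisfies `s • u ≤ A *ᵥ u` with `s > ρ(A)`. Take an eigenvalue `μ`
with `‖μ‖ = ρ(A)` and an eigenvector `x`: then `ρ(A) • |x| ≤ A *ᵥ |x|`, and smoothing by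
`(1 + A) ^ m` shows that this must be an equality, with `|x|` positive. The same smoothing makes
every real eigenvector for `ρ(A)` a multiple of this positive vector `v`, so the eigenspace is a
line. Applied to `Aᵀ`, the argument gives a positive left eigenvector `w`, and `w ⬝ᵥ v > 0`
excludes Jordan chains: if `(A - ρ) ^ 2 x = 0`, then `(A - ρ) x = c • v` and
`0 = w ⬝ᵥ (A - ρ) x = c * (w ⬝ᵥ v)`.
-/

open Matrix Polynomial

open Filter Topology

theorem spectrum.spectralRadius_le_ofReal {𝕜 B : Type*} [NormedField 𝕜] [Ring B] [Algebra 𝕜 B]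
    {a : B} {r : ℝ} (h : ∀ μ ∈ spectrum 𝕜 a, ‖μ‖ ≤ r) : spectralRadius 𝕜 a ≤ ENNReal.ofReal r :=
  iSup₂_le fun μ hμ => by
    rw [← ENNReal.ofReal_coe_nnreal, coe_nnnorm]
    exact ENNReal.ofReal_le_ofReal (h μ hμ)

theorem spectrum.ofReal_le_spectralRadius_of_le_norm_pow {B : Type*} [NormedRing B]
    [NormedAlgebra ℂ B] [CompleteSpace B] (a : B) {s c : ℝ} (hs : 0 ≤ s) (hc : 0 < c)
    (h : ∀ k : ℕ, c * s ^ k ≤ ‖a ^ k‖) :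
    ENNReal.ofReal s ≤ spectralRadius ℂ a := by
  have hc' : Tendsto (fun k : ℕ => c ^ (1 / k : ℝ)) atTop (𝓝 1) := by
    simpa [Function.comp_def] using (Real.continuousAt_const_rpow hc.ne').tendsto.comp
      tendsto_one_div_atTop_nhds_zero_nat
  have hlim : Tendsto (fun k : ℕ => (c * s ^ k) ^ (1 / k : ℝ)) atTop (𝓝 s) := by
    refine (by simpa using hc'.mul_const s : Tendsto _ atTop (𝓝 s)).congr' ?_
    filter_upwards [eventually_ne_atTop 0] with k hk
    rw [Real.mul_rpow hc.le (by positivity), ← Real.rpow_natCast, ← Real.rpow_mul hs]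
    field_simp
    simp
  refine le_of_tendsto_of_tendsto ((ENNReal.continuous_ofReal.tendsto s).comp hlim)
    (pow_norm_pow_one_div_tendsto_nhds_spectralRadius a) (Eventually.of_forall fun k => ?_)
  exact ENNReal.ofReal_le_ofReal (Real.rpow_le_rpow (by positivity) (h k) (by positivity))

theorem Module.End.rootMultiplicity_charpoly_eq_one {K V : Type*} [Field K] [AddCommGroup V]
    [Module K V] [FiniteDimensional K V] {f : End K V} {μ : K} {v : V} (hv : v ≠ 0)
    (hspan : f.eigenspace μ = K ∙ v) {φ : V →ₗ[K] K} (hφ : ∀ x, φ (f x) = μ * φ x)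
    (hφv : φ v ≠ 0) :
    f.charpoly.rootMultiplicity μ = 1 := by
  set g := f - μ • (1 : End K V)
  have hg : ∀ x, g x = 0 ↔ x ∈ K ∙ v := fun x => by
    simp [← hspan, g, sub_eq_zero]
  -- `φ` vanishes on the range of `g` but not on `v`
  have hker_sq : ∀ x, g (g x) = 0 → g x = 0 := fun x hx => by
    obtain ⟨t, ht⟩ := Submodule.mem_span_singleton.1 ((hg _).1 hx)
    have : φ (g x) = 0 := by simp [g, hφ]
    rw [← ht, map_smul, smul_eq_mul, mul_eq_zero] at this
    rw [← ht, this.resolve_right hφv, zero_smul]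
  have hker_pow : ∀ k x, (g ^ k) x = 0 → g x = 0 := fun k => by
    induction k with
    | zero => simp
    | succ k ih =>
      exact fun x hx => hker_sq x (ih (g x) (by rwa [← Module.End.mul_apply, ← pow_succ]))
  have hmax : f.maxGenEigenspace μ = K ∙ v := by
    refine le_antisymm (fun x hx => ?_) (hspan ▸ eigenspace_le_maxGenEigenspace)
    obtain ⟨k, hk⟩ := (mem_maxGenEigenspace f μ x).1 hx
    exact (hg x).1 (hker_pow k x hk)
  rw [← LinearMap.finrank_maxGenEigenspace_eq, hmax, finrank_span_singleton hv]

theorem exists_pos_forall_mul_lt {ι : Type*} [Finite ι] (x : ι → ℝ) {y : ι → ℝ}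
    (hy : ∀ i, 0 < y i) : ∃ ε > 0, ∀ i, ε * x i < y i := by
  have : ∀ᶠ ε in 𝓝[>] (0 : ℝ), ∀ i, ε * x i < y i :=
    nhdsWithin_le_nhds <| eventually_all.2 fun i =>
      (continuous_id.mul continuous_const).tendsto' 0 0 (by simp) |>.eventually (gt_mem_nhds (hy i))
  obtain ⟨ε, hε, hεpos⟩ := (this.and self_mem_nhdsWithin).exists
  exact ⟨ε, hεpos, hε⟩

namespace Matrix

variable {ι R : Type*} [Fintype ι]

section OrderedSemiring

variable [Semiring R] [PartialOrder R]

theorem mulVec_mono_of_nonneg_s8 [IsOrderedRing R] {A : Matrix ι ι R} (hA : ∀ i j, 0 ≤ A i j)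
    {x y : ι → R} (h : x ≤ y) : A *ᵥ x ≤ A *ᵥ y := fun i =>
  Finset.sum_le_sum fun j _ => mul_le_mul_of_nonneg_left (h j) (hA i j)

theorem mulVec_apply_pos_of_pos [IsStrictOrderedRing R] {P : Matrix ι ι R}
    (hP : ∀ i j, 0 < P i j) {x : ι → R} (hx : 0 < x) (i : ι) : 0 < (P *ᵥ x) i := by
  obtain ⟨j, hj⟩ := (Pi.lt_def.1 hx).2
  exact Finset.sum_pos' (fun j _ => mul_nonneg (hP i j).le (hx.le j))
    ⟨j, Finset.mem_univ j, mul_pos (hP i j) hj⟩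

theorem pow_apply_le_one_add_pow_apply [DecidableEq ι] [IsOrderedRing R] {A : Matrix ι ι R}
    (hA : ∀ i j, 0 ≤ A i j) {k m : ℕ} (hkm : k ≤ m) (i j : ι) :
    (A ^ k) i j ≤ ((1 + A) ^ m) i j := by
  have hbinom : (1 + A) ^ m = ∑ l ∈ Finset.range (m + 1), m.choose l • A ^ l := by
    rw [add_comm, (Commute.one_right A).add_pow]
    simp [nsmul_eq_mul, Nat.cast_comm]
  rw [hbinom, sum_apply]
  refine le_trans ?_ (Finset.single_le_sum (f := fun l => (m.choose l • A ^ l) i j)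
    (fun l _ => nsmul_nonneg (pow_apply_nonneg hA l i j) _) (Finset.mem_range_succ_iff.2 hkm))
  simpa using le_smul_of_one_le_left (pow_apply_nonneg hA k i j)
    (Nat.succ_le_of_lt (Nat.choose_pos hkm))

end OrderedSemiring

section CommSemiring

variable [DecidableEq ι] [CommSemiring R]

theorem pow_mulVec_eq_pow_smul {M : Matrix ι ι R} {u : ι → R} {c : R} (h : M *ᵥ u = c • u)
    (k : ℕ) : (M ^ k) *ᵥ u = c ^ k • u := by
  induction k with
  | zero => simp
  | succ k ih => rw [pow_succ, ← mulVec_mulVec, h, mulVec_smul, ih, smul_smul, pow_succ']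

theorem pow_smul_le_pow_mulVec [PartialOrder R] [IsOrderedRing R] {M : Matrix ι ι R}
    (hM : ∀ i j, 0 ≤ M i j) {u : ι → R} {s : R} (hs : 0 ≤ s) (h : s • u ≤ M *ᵥ u) (k : ℕ) :
    s ^ k • u ≤ (M ^ k) *ᵥ u := by
  induction k with
  | zero => simp
  | succ k ih =>
    calc s ^ (k + 1) • u = s ^ k • (s • u) := by rw [pow_succ, mul_smul]
      _ ≤ s ^ k • (M *ᵥ u) := smul_le_smul_of_nonneg_left h (pow_nonneg hs k)
      _ = M *ᵥ (s ^ k • u) := (mulVec_smul M _ u).symm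
      _ ≤ M *ᵥ ((M ^ k) *ᵥ u) := mulVec_mono_of_nonneg_s8 hM ih
      _ = (M ^ (k + 1)) *ᵥ u := by rw [mulVec_mulVec, pow_succ']

end CommSemiring

theorem spectrum_transpose [DecidableEq ι] [CommRing R] (M : Matrix ι ι R) :
    spectrum R Mᵀ = spectrum R M := by
  ext r
  simp only [spectrum.mem_iff, isUnit_iff_isUnit_det]
  rw [← det_transpose, transpose_sub, transpose_transpose, algebraMap_eq_diagonal,
    diagonal_transpose]

theorem map_ofReal_mulVec (A : Matrix ι ι ℝ) (x : ι → ℝ) :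
    A.map (Complex.ofReal : ℝ → ℂ) *ᵥ (fun i => (x i : ℂ)) = fun i => ((A *ᵥ x) i : ℂ) :=
  funext fun i => (RingHom.map_mulVec Complex.ofRealHom A x i).symm

theorem norm_smul_norm_le_mulVec_norm {A : Matrix ι ι ℝ} (hA : ∀ i j, 0 ≤ A i j) {x : ι → ℂ}
    {μ : ℂ} (h : A.map (Complex.ofReal : ℝ → ℂ) *ᵥ x = μ • x) :
    ‖μ‖ • (‖x ·‖) ≤ A *ᵥ (‖x ·‖) := fun i =>
  calc ‖μ‖ * ‖x i‖ = ‖∑ j, (A i j : ℂ) * x j‖ := by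
        rw [← norm_mul, ← smul_eq_mul, ← Pi.smul_apply, ← h]; rfl
    _ ≤ ∑ j, ‖(A i j : ℂ) * x j‖ := norm_sum_le _ _
    _ = (A *ᵥ (‖x ·‖)) i := Finset.sum_congr rfl fun j _ => by
        rw [norm_mul, Complex.norm_real, Real.norm_of_nonneg (hA i j)]

variable [DecidableEq ι]

section LinftyOpNorm

attribute [local instance] Matrix.linftyOpNormedAddCommGroup Matrix.linftyOpNormedRing
  Matrix.linftyOpNormedAlgebra

theorem linfty_opNorm_map_ofReal (A : Matrix ι ι ℝ) :
    ‖A.map (Complex.ofReal : ℝ → ℂ)‖ = ‖A‖ := by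
  simp [linfty_opNorm_def]

theorem ofReal_le_spectralRadius_of_smul_le_mulVec [Nonempty ι] {A : Matrix ι ι ℝ}
    (hA : ∀ i j, 0 ≤ A i j) {u : ι → ℝ} (hu : ∀ i, 0 < u i) {s : ℝ} (h : s • u ≤ A *ᵥ u) :
    ENNReal.ofReal s ≤ spectralRadius ℂ (A.map (Complex.ofReal : ℝ → ℂ)) := by
  rcases le_or_gt s 0 with hs | hs
  · simp [ENNReal.ofReal_of_nonpos hs]
  obtain ⟨i⟩ := ‹Nonempty ι›
  have hu0 : 0 < ‖u‖ := (hu i).trans_le ((Real.le_norm_self _).trans (norm_le_pi_norm u i))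
  refine spectrum.ofReal_le_spectralRadius_of_le_norm_pow _ hs.le (div_pos (hu i) hu0)
    fun k => ?_
  rw [show A.map Complex.ofReal ^ k = (A ^ k).map Complex.ofReal from
    (A.map_pow Complex.ofRealHom k).symm, linfty_opNorm_map_ofReal,
    div_mul_eq_mul_div, div_le_iff₀ hu0, mul_comm]
  calc s ^ k * u i ≤ (A ^ k *ᵥ u) i := pow_smul_le_pow_mulVec hA hs.le h k i
    _ ≤ ‖A ^ k *ᵥ u‖ := (Real.le_norm_self _).trans (norm_le_pi_norm _ i)
    _ ≤ ‖A ^ k‖ * ‖u‖ := linfty_opNorm_mulVec _ _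

end LinftyOpNorm

namespace IsIrreducible

variable {A : Matrix ι ι ℝ} {r : ℝ}

theorem exists_pos_one_add_pow (hA : A.IsIrreducible) :
    ∃ m, ∀ i j, 0 < ((1 + A) ^ m : Matrix ι ι ℝ) i j := by
  choose k _ hk using (isIrreducible_iff_exists_pow_pos hA.nonneg).1 hA
  obtain ⟨m, hm⟩ := Finite.exists_le fun p : ι × ι => k p.1 p.2
  exact ⟨m, fun i j => (hk i j).trans_le
    (pow_apply_le_one_add_pow_apply hA.nonneg (hm (i, j)) i j)⟩

theorem pos_of_mulVec_eq_smul (hA : A.IsIrreducible) {u : ι → ℝ} (hu : 0 < u) {c : ℝ}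
    (h : A *ᵥ u = c • u) (i : ι) : 0 < u i := by
  obtain ⟨m, hP⟩ := hA.exists_pos_one_add_pow
  have hPu := mulVec_apply_pos_of_pos hP hu i
  rw [pow_mulVec_eq_pow_smul (c := 1 + c) (by rw [add_mulVec, h, one_mulVec, add_smul, one_smul])]
    at hPu
  exact (hu.le i).lt_of_ne fun hi => by simp [← hi] at hPu

/- If `A *ᵥ u - r • u` were nonzero, smoothing by the positive matrix `(1 + A) ^ m` would give a
positive vector `u'` with `(r + ε) • u' ≤ A *ᵥ u'`, pushing the spectral radius above `r`. -/
theorem mulVec_eq_smul_of_smul_le_mulVec (hA : A.IsIrreducible)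
    (hr : IsGreatest ((‖·‖) '' spectrum ℂ (A.map (Complex.ofReal : ℝ → ℂ))) r) {u : ι → ℝ}
    (hu : 0 < u) (h : r • u ≤ A *ᵥ u) : A *ᵥ u = r • u := by
  obtain ⟨m, hP⟩ := hA.exists_pos_one_add_pow
  set P := (1 + A) ^ m
  have hcomm : P *ᵥ (A *ᵥ u) = A *ᵥ (P *ᵥ u) := by
    rw [mulVec_mulVec, mulVec_mulVec, ((Commute.one_left A).add_left (Commute.refl A)).pow_left m]
  by_contra hne
  have hd : 0 < A *ᵥ u - r • u := (sub_nonneg.2 h).lt_of_ne (sub_ne_zero.2 hne).symm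
  obtain ⟨ε, hε, hεd⟩ := exists_pos_forall_mul_lt (P *ᵥ u) (mulVec_apply_pos_of_pos hP hd)
  have hsub : (r + ε) • (P *ᵥ u) ≤ A *ᵥ (P *ᵥ u) := fun i => by
    have := hεd i
    simp only [mulVec_sub, mulVec_smul, hcomm, Pi.sub_apply, Pi.smul_apply, smul_eq_mul] at this ⊢
    linarith
  have : Nonempty ι := ⟨(Pi.lt_def.1 hu).2.choose⟩
  have hle := (ofReal_le_spectralRadius_of_smul_le_mulVec hA.nonneg
    (mulVec_apply_pos_of_pos hP hu) hsub).trans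
    (spectrum.spectralRadius_le_ofReal fun μ hμ => hr.2 ⟨μ, hμ, rfl⟩)
  obtain ⟨μ, -, hμ⟩ := hr.1
  rw [ENNReal.ofReal_le_ofReal_iff (hμ ▸ norm_nonneg μ)] at hle
  linarith

theorem exists_pos_mulVec_eq_smul (hA : A.IsIrreducible)
    (hr : IsGreatest ((‖·‖) '' spectrum ℂ (A.map (Complex.ofReal : ℝ → ℂ))) r) :
    ∃ v : ι → ℝ, (∀ i, 0 < v i) ∧ A *ᵥ v = r • v := by
  obtain ⟨μ, hμ, rfl⟩ := hr.1
  rw [← spectrum_toLin', ← Module.End.hasEigenvalue_iff_mem_spectrum] at hμ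
  obtain ⟨x, hx⟩ := hμ.exists_hasEigenvector
  have hAx : A.map Complex.ofReal *ᵥ x = μ • x := by
    rw [← toLin'_apply]
    exact hx.apply_eq_smul
  have hy : 0 < (‖x ·‖) := (Pi.le_def.2 fun i => norm_nonneg (x i)).lt_of_ne fun h => hx.2 <|
    funext fun i => norm_eq_zero.1 (congrFun h i).symm
  have hAy := hA.mulVec_eq_smul_of_smul_le_mulVec hr hy
    (norm_smul_norm_le_mulVec_norm hA.nonneg hAx)
  exact ⟨_, hA.pos_of_mulVec_eq_smul hy hAy, hAy⟩

/- `y - t • v`, with `t` the largest admissible multiple, is a nonnegative eigenvector with a zero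
entry, hence not positive, hence zero. -/
theorem exists_eq_smul_of_mulVec_eq_smul (hA : A.IsIrreducible) {v : ι → ℝ} (hv : ∀ i, 0 < v i)
    (hAv : A *ᵥ v = r • v) {y : ι → ℝ} (hy : A *ᵥ y = r • y) : ∃ t : ℝ, y = t • v := by
  cases isEmpty_or_nonempty ι
  · exact ⟨0, Subsingleton.elim _ _⟩
  obtain ⟨i₀, hi₀⟩ := Finite.exists_min fun i => y i / v i
  refine ⟨y i₀ / v i₀, ?_⟩
  set z := y - (y i₀ / v i₀) • v
  have hz : 0 ≤ z := fun i => by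
    have := (le_div_iff₀ (hv i)).1 (hi₀ i)
    simp only [z, Pi.sub_apply, Pi.smul_apply, smul_eq_mul, Pi.zero_apply]
    linarith
  have hzi₀ : z i₀ = 0 := by simp [z, div_mul_cancel₀ _ (hv i₀).ne']
  have hAz : A *ᵥ z = r • z := by
    rw [mulVec_sub, mulVec_smul, hy, hAv, smul_sub, smul_comm]
  by_contra hne
  exact (hA.pos_of_mulVec_eq_smul (hz.lt_of_ne (Ne.symm (sub_ne_zero.2 hne))) hAz i₀).ne' hzi₀

theorem exists_eq_smul_of_map_mulVec_eq_smul (hA : A.IsIrreducible) {v : ι → ℝ}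
    (hv : ∀ i, 0 < v i) (hAv : A *ᵥ v = r • v) {y : ι → ℂ}
    (hy : A.map (Complex.ofReal : ℝ → ℂ) *ᵥ y = (r : ℂ) • y) :
    ∃ t : ℂ, y = t • fun i => (v i : ℂ) := by
  have hpart : ∀ f : ℂ →ₗ[ℝ] ℝ, A *ᵥ (f ∘ y) = r • (f ∘ y) := fun f => funext fun i => by
    have := congrArg f (congrFun hy i)
    simpa [mulVec, dotProduct, ← Complex.real_smul, map_sum] using this
  obtain ⟨a, ha⟩ := hA.exists_eq_smul_of_mulVec_eq_smul hv hAv (hpart Complex.reLm)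
  obtain ⟨b, hb⟩ := hA.exists_eq_smul_of_mulVec_eq_smul hv hAv (hpart Complex.imLm)
  refine ⟨a + b * Complex.I, funext fun i => Complex.ext ?_ ?_⟩
  · simpa using congrFun ha i
  · simpa using congrFun hb i

theorem rootMultiplicity_charpoly_eq_one (hA : A.IsIrreducible)
    (hr : IsGreatest ((‖·‖) '' spectrum ℂ (A.map (Complex.ofReal : ℝ → ℂ))) r) :
    A.charpoly.rootMultiplicity r = 1 := by
  obtain ⟨v, hv, hAv⟩ := hA.exists_pos_mulVec_eq_smul hr
  obtain ⟨w, hw, hAw⟩ := hA.transpose.exists_pos_mulVec_eq_smul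
    (by rwa [transpose_map, spectrum_transpose])
  obtain ⟨i₀⟩ : Nonempty ι := by
    by_contra h
    have : IsEmpty ι := not_nonempty_iff.1 h
    obtain ⟨μ, hμ, -⟩ := hr.1
    rwa [spectrum.of_subsingleton] at hμ
  set vc : ι → ℂ := fun i => (v i : ℂ)
  set wc : ι → ℂ := fun i => (w i : ℂ)
  have hAvc : A.map Complex.ofReal *ᵥ vc = (r : ℂ) • vc := by
    rw [map_ofReal_mulVec, hAv]
    ext i
    simp [vc]
  have hAwc : wc ᵥ* A.map Complex.ofReal = (r : ℂ) • wc := by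
    rw [← mulVec_transpose, ← transpose_map, map_ofReal_mulVec, hAw]
    ext i
    simp [wc]
  rw [eq_rootMultiplicity_map (f := Complex.ofRealHom) Complex.ofReal_injective, ← charpoly_map,
    show ⇑Complex.ofRealHom = Complex.ofReal from rfl, ← charpoly_toLin']
  refine Module.End.rootMultiplicity_charpoly_eq_one (v := vc) (φ := dotProductBilin ℂ ℂ wc)
    (fun h => (hv i₀).ne' (by simpa [vc] using congrFun h i₀)) ?_ (fun x => ?_) ?_
  · ext x
    rw [Module.End.mem_eigenspace_iff, toLin'_apply, Submodule.mem_span_singleton]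
    constructor
    · exact fun hx => (hA.exists_eq_smul_of_map_mulVec_eq_smul hv hAv hx).imp fun t ht => ht.symm
    · rintro ⟨t, rfl⟩
      rw [mulVec_smul, hAvc, smul_comm]
  · simp [dotProduct_mulVec, hAwc]
  · have : 0 < w ⬝ᵥ v := Finset.sum_pos (fun i _ => mul_pos (hw i) (hv i)) ⟨i₀, Finset.mem_univ _⟩
    simpa [vc, wc, dotProduct, ← Complex.ofReal_mul, ← Complex.ofReal_sum] using this.ne'

end IsIrreducible

end Matrix

theorem isGreatest_specRad {n : ℕ} (hn : 1 ≤ n) (A : Matrix (Fin n) (Fin n) ℝ) :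
    IsGreatest ((‖·‖) '' spectrum ℂ (A.map (Complex.ofReal : ℝ → ℂ))) (specRad A) := by
  set M := A.map (Complex.ofReal : ℝ → ℂ)
  have hspec : spectrum ℂ M = {μ | μ ∈ M.charpoly.roots} := by
    ext μ
    simp [mem_spectrum_iff_isRoot_charpoly, mem_roots', M.charpoly_monic.ne_zero]
  have hne : (spectrum ℂ M).Nonempty :=
    (IsAlgClosed.exists_root M.charpoly (by simp [charpoly_degree_eq_dim]; omega)).imp
      fun _ => mem_spectrum_iff_isRoot_charpoly.2
  have hfin : ((‖·‖) '' spectrum ℂ M).Finite := (hspec ▸ M.charpoly.roots.finite_toSet).image _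
  have hsup : specRad A = sSup ((‖·‖) '' spectrum ℂ M) := by
    rw [specRad, hspec]
    rfl
  exact hsup ▸ ⟨(hne.image _).csSup_mem hfin, fun _ hx => le_csSup hfin.bddAbove hx⟩

theorem specRad_simple_root_of_irreducible {n : ℕ} (hn : 1 ≤ n)
    (A : Matrix (Fin n) (Fin n) ℝ)
    (hA : ∀ i j, 0 ≤ A i j)
    (hirr : ∀ i j, ∃ k : ℕ, 1 ≤ k ∧ 0 < (A ^ k) i j) :
    A.charpoly.rootMultiplicity (specRad A) = 1 :=
  ((isIrreducible_iff_exists_pow_pos hA).2 hirr).rootMultiplicity_charpoly_eq_one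
    (isGreatest_specRad hn A)
end

section
/- Monotonicity of the spectral radius: let E be a real Banach space with a closed proper generating convex cone C, and let A₁ and A₂ be positive compact bounded linear operators on E such that A₂ − A₁ is positive (i.e. (A₂ − A₁)(C) ⊆ C). Then r(A₂) ≥ r(A₁), where r denotes the spectral radius. -/
/-!
Suppose `r₂ < l < r₁`. Since `‖A₁ᵏ‖ / lᵏ → ∞`, the uniform boundedness principle and the fact that
`C` is generating give some `u ∈ C` with `‖A₁ᵏ u‖ / lᵏ` unbounded. At the indices `k + 1` where
this ratio increases and exceeds `1`, the unit vectors `xₖ = A₁ᵏ⁺¹ u / ‖A₁ᵏ⁺¹ u‖` lie in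
`A₁ (closedBall 0 l⁻¹)`, so compactness of `A₁` yields a limit `a` of a subsequence, with `‖a‖ = 1`
and `a ∈ C`. The vectors `yₖ = A₂ᵏ⁺¹ u / ‖A₁ᵏ⁺¹ u‖` tend to `0` because `r₂ < l`, and
`yₖ - xₖ ∈ C` because `A₂ᵏ - A₁ᵏ` is positive; hence `-a ∈ C`, and properness forces `a = 0`.
-/

open Filter Set Topology Metric

section RootTest

variable {a : ℕ → ℝ} {r l : ℝ}

lemma tendsto_div_pow_atTop_of_lt_root (ha : ∀ k, 0 ≤ a k)
    (hroot : Tendsto (fun k : ℕ => a k ^ (k : ℝ)⁻¹) atTop (𝓝 r)) (hl : 0 < l) (hlr : l < r) :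
    Tendsto (fun k => a k / l ^ k) atTop atTop := by
  obtain ⟨m, hlm, hmr⟩ := exists_between hlr
  refine tendsto_atTop_mono' atTop ?_
    (tendsto_pow_atTop_atTop_of_one_lt ((one_lt_div hl).2 hlm))
  filter_upwards [hroot.eventually_const_lt hmr, eventually_gt_atTop 0] with k hk hk0
  have hmk := (Real.le_rpow_inv_iff_of_pos (hl.trans hlm).le (ha k) (Nat.cast_pos.2 hk0)).1 hk.le
  rw [Real.rpow_natCast] at hmk
  rw [div_pow]
  gcongr

lemma tendsto_div_pow_zero_of_root_lt (ha : ∀ k, 0 ≤ a k)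
    (hroot : Tendsto (fun k : ℕ => a k ^ (k : ℝ)⁻¹) atTop (𝓝 r)) (hrl : r < l) :
    Tendsto (fun k => a k / l ^ k) atTop (𝓝 0) := by
  have hr : 0 ≤ r := ge_of_tendsto' hroot fun k => by have := ha k; positivity
  obtain ⟨m, hrm, hml⟩ := exists_between hrl
  have hm : 0 < m := hr.trans_lt hrm
  have hl : 0 < l := hm.trans hml
  refine squeeze_zero' (Eventually.of_forall fun k => by have := ha k; positivity) ?_
    (tendsto_pow_atTop_nhds_zero_of_lt_one (div_nonneg hm.le hl.le) ((div_lt_one hl).2 hml))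
  filter_upwards [hroot.eventually_lt_const hrm, eventually_gt_atTop 0] with k hk hk0
  have hkm := (Real.rpow_inv_le_iff_of_pos (ha k) hm.le (Nat.cast_pos.2 hk0)).1 hk.le
  rw [Real.rpow_natCast] at hkm
  rw [div_pow]
  gcongr

end RootTest

lemma exists_le_succ_of_not_bddAbove {s : ℕ → ℝ} (hs : ¬BddAbove (range s)) (N : ℕ) (B : ℝ) :
    ∃ k, N ≤ k ∧ B < s (k + 1) ∧ s k ≤ s (k + 1) := by
  set M := max B ((Finset.range (N + 1)).sup' Finset.nonempty_range_add_one s)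
  obtain ⟨_, ⟨m, rfl⟩, hm⟩ := not_bddAbove_iff.1 hs M
  obtain ⟨n, hn, hmax⟩ := (Finset.range (m + 1)).exists_max_image s ⟨m, by simp⟩
  have hMn : M < s n := hm.trans_le (hmax m (by simp))
  have hNn : N < n := by
    by_contra! hnN
    exact (hMn.trans_le ((Finset.le_sup' s (by simp; omega)).trans (le_max_right _ _))).false
  obtain ⟨k, rfl⟩ := Nat.exists_eq_add_of_lt hNn
  exact ⟨N + k, by omega, (le_max_left _ _).trans_lt hMn,
    hmax _ (by simp at hn ⊢; omega)⟩

section ClosedProperCone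

variable {E : Type*} [AddCommGroup E] [TopologicalSpace E] [IsTopologicalAddGroup E]
  {C : Set E}

lemma eq_zero_of_tendsto_of_sub_mem (hC_closed : IsClosed C) (hC_proper : C ∩ -C = {0})
    {ι : Type*} {L : Filter ι} [L.NeBot] {x y : ι → E} {a : E} (hx : ∀ j, x j ∈ C)
    (hyx : ∀ j, y j - x j ∈ C) (hxa : Tendsto x L (𝓝 a)) (hy : Tendsto y L (𝓝 0)) : a = 0 := by
  have ha : a ∈ C := hC_closed.mem_of_tendsto hxa (Eventually.of_forall hx)
  have hna : -a ∈ C := hC_closed.mem_of_tendsto (by simpa using hy.sub hxa)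
    (Eventually.of_forall hyx)
  have : a ∈ C ∩ -C := ⟨ha, mem_neg.2 hna⟩
  rwa [hC_proper] at this

end ClosedProperCone

lemma banach_steinhaus_of_generating {𝕜 E F ι : Type*} [NontriviallyNormedField 𝕜]
    [NormedAddCommGroup E] [NormedSpace 𝕜 E] [CompleteSpace E]
    [NormedAddCommGroup F] [NormedSpace 𝕜 F] {C : Set E}
    (hC_gen : ∀ x : E, ∃ y ∈ C, ∃ z ∈ C, x = y - z) {g : ι → E →L[𝕜] F}
    (h : ∀ u ∈ C, ∃ M, ∀ i, ‖g i u‖ ≤ M) : ∃ M, ∀ i, ‖g i‖ ≤ M := by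
  refine banach_steinhaus fun x => ?_
  obtain ⟨y, hy, z, hz, rfl⟩ := hC_gen x
  obtain ⟨My, hMy⟩ := h y hy
  obtain ⟨Mz, hMz⟩ := h z hz
  exact ⟨My + Mz, fun i => by grw [map_sub, norm_sub_le, hMy, hMz]⟩

section OperatorPowers

variable {E : Type*} [NormedAddCommGroup E] [NormedSpace ℝ E] {C : Set E}

lemma pow_mapsTo {A : E →L[ℝ] E} (hA : MapsTo A C C) (k : ℕ) : MapsTo (A ^ k) C C := by
  rw [FunLike.coe_pow_eq_iterate]
  exact hA.iterate k

lemma pow_sub_pow_mapsTo (hC_zero : (0 : E) ∈ C) (hC_add : ∀ x ∈ C, ∀ y ∈ C, x + y ∈ C)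
    {A B : E →L[ℝ] E} (hA : MapsTo A C C) (hB : MapsTo B C C) (hBA : MapsTo (B - A) C C) (k : ℕ) :
    MapsTo (B ^ k - A ^ k) C C := by
  induction k with
  | zero => exact fun _ _ => by simpa using hC_zero
  | succ k ih =>
    intro x hx
    have hsplit :
        (B ^ (k + 1) - A ^ (k + 1)) x = (B ^ k) ((B - A) x) + (B ^ k - A ^ k) (A x) := by
      simp only [pow_succ, sub_apply, mul_apply_eq_comp, map_sub]
      abel
    rw [hsplit]
    exact hC_add _ (pow_mapsTo hB k (hBA hx)) _ (ih (hA hx))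

lemma exists_mem_not_bddAbove_norm_pow_apply [CompleteSpace E]
    (hC_gen : ∀ x : E, ∃ y ∈ C, ∃ z ∈ C, x = y - z) {A : E →L[ℝ] E} {l : ℝ} (hl : 0 < l)
    (hA : Tendsto (fun k => ‖A ^ k‖ / l ^ k) atTop atTop) :
    ∃ u ∈ C, ¬BddAbove (range fun k => ‖(A ^ k) u‖ / l ^ k) := by
  by_contra! hbdd
  obtain ⟨M, hM⟩ := banach_steinhaus_of_generating hC_gen
    (g := fun k : ℕ => (l ^ k)⁻¹ • A ^ k) fun u hu => by
      obtain ⟨M, hM⟩ := hbdd u hu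
      refine ⟨M, fun k => ?_⟩
      simpa [norm_smul, abs_of_pos hl, div_eq_inv_mul] using hM ⟨k, rfl⟩
  obtain ⟨k, hk⟩ := (hA.eventually_gt_atTop M).exists
  refine hk.not_ge ?_
  simpa [norm_smul, abs_of_pos hl, div_eq_inv_mul] using hM k

lemma inv_norm_smul_pow_succ_apply_mem_image_closedBall {A : E →L[ℝ] E} {l : ℝ} (hl : 0 < l)
    {u : E} {k : ℕ} (hAu : (A ^ (k + 1)) u ≠ 0)
    (hk : ‖(A ^ k) u‖ / l ^ k ≤ ‖(A ^ (k + 1)) u‖ / l ^ (k + 1)) :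
    ‖(A ^ (k + 1)) u‖⁻¹ • (A ^ (k + 1)) u ∈ A '' closedBall 0 l⁻¹ := by
  have hpos : 0 < ‖(A ^ (k + 1)) u‖ := norm_pos_iff.2 hAu
  refine ⟨‖(A ^ (k + 1)) u‖⁻¹ • (A ^ k) u, ?_, by rw [map_smul, pow_succ']; rfl⟩
  rw [mem_closedBall_zero_iff, norm_smul, norm_inv, norm_norm, inv_mul_le_iff₀ hpos]
  rw [div_le_div_iff₀ (by positivity) (by positivity), pow_succ] at hk
  rw [← div_eq_mul_inv, le_div_iff₀ hl]
  exact le_of_mul_le_mul_right (by linarith) (pow_pos hl k)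

lemma exists_tendsto_inv_norm_smul_pow_apply [CompleteSpace E]
    (hC_gen : ∀ x : E, ∃ y ∈ C, ∃ z ∈ C, x = y - z) {A : E →L[ℝ] E} (hA : IsCompactOperator A)
    {l : ℝ} (hl : 0 < l) (hgrowth : Tendsto (fun k => ‖A ^ k‖ / l ^ k) atTop atTop) :
    ∃ u ∈ C, ∃ n : ℕ → ℕ, ∃ a : E, Tendsto n atTop atTop ∧ (∀ j, l ^ n j ≤ ‖(A ^ n j) u‖) ∧
      ‖a‖ = 1 ∧ Tendsto (fun j => ‖(A ^ n j) u‖⁻¹ • (A ^ n j) u) atTop (𝓝 a) := by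
  obtain ⟨u, hu, hunb⟩ := exists_mem_not_bddAbove_norm_pow_apply hC_gen hl hgrowth
  choose k hk_ge hk_gt hk_le using exists_le_succ_of_not_bddAbove hunb (B := 1)
  have hlow : ∀ j, l ^ (k j + 1) < ‖(A ^ (k j + 1)) u‖ := fun j =>
    (one_lt_div (pow_pos hl _)).1 (hk_gt j)
  have hne : ∀ j, (A ^ (k j + 1)) u ≠ 0 := fun j =>
    norm_pos_iff.1 ((pow_pos hl _).trans (hlow j))
  obtain ⟨a, -, φ, hφ, hxa⟩ := (hA.isCompact_closure_image_closedBall l⁻¹).tendsto_subseq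
    fun j => subset_closure
      (inv_norm_smul_pow_succ_apply_mem_image_closedBall hl (hne j) (hk_le j))
  refine ⟨u, hu, fun j => k (φ j) + 1, a, ?_, fun j => (hlow (φ j)).le, ?_, hxa⟩
  · exact tendsto_atTop_mono (fun j => (hφ.le_apply.trans (hk_ge (φ j))).trans (Nat.le_succ _))
      tendsto_id
  · exact tendsto_nhds_unique hxa.norm
      (tendsto_const_nhds.congr fun j => (norm_smul_inv_norm (hne (φ j))).symm)

lemma tendsto_inv_smul_pow_apply_zero {B : E →L[ℝ] E} {l : ℝ} (hl : 0 < l)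
    (hB : Tendsto (fun k => ‖B ^ k‖ / l ^ k) atTop (𝓝 0)) {n : ℕ → ℕ}
    (hn : Tendsto n atTop atTop) {c : ℕ → ℝ} (hc : ∀ j, l ^ n j ≤ c j) (u : E) :
    Tendsto (fun j => (c j)⁻¹ • (B ^ n j) u) atTop (𝓝 0) := by
  refine squeeze_zero_norm (fun j => ?_) (by simpa using (hB.comp hn).mul_const ‖u‖)
  have hcpos : 0 < c j := (pow_pos hl _).trans_le (hc j)
  rw [norm_smul, norm_inv, Real.norm_of_nonneg hcpos.le, div_mul_eq_mul_div, inv_mul_eq_div]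
  gcongr
  · exact (B ^ n j).le_opNorm u
  · exact hc j

end OperatorPowers

theorem spectral_radius_monotone_general
    {E : Type*} [NormedAddCommGroup E] [NormedSpace ℝ E] [CompleteSpace E]
    (C : Set E) (hC_closed : IsClosed C)
    (hC_add : ∀ x ∈ C, ∀ y ∈ C, x + y ∈ C)
    (hC_smul : ∀ t : ℝ, 0 ≤ t → ∀ x ∈ C, t • x ∈ C)
    (hC_proper : C ∩ (-C) = {0})
    (hC_gen : ∀ x : E, ∃ y ∈ C, ∃ z ∈ C, x = y - z)
    (A₁ A₂ : E →L[ℝ] E)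
    (hA₁_pos : ∀ x ∈ C, A₁ x ∈ C)
    (hA₂_pos : ∀ x ∈ C, A₂ x ∈ C)
    (hA₁_compact : IsCompactOperator A₁)
    (hdiff_pos : ∀ x ∈ C, (A₂ - A₁) x ∈ C)
    (r₁ r₂ : ℝ)
    (hr₁ : Tendsto (fun k : ℕ => ‖A₁ ^ k‖ ^ ((k : ℝ)⁻¹)) atTop (nhds r₁))
    (hr₂ : Tendsto (fun k : ℕ => ‖A₂ ^ k‖ ^ ((k : ℝ)⁻¹)) atTop (nhds r₂)) :
    r₁ ≤ r₂ := by
  by_contra! hlt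
  obtain ⟨l, hr₂l, hlr₁⟩ := exists_between hlt
  have hl : 0 < l := (ge_of_tendsto' hr₂ fun k => by positivity).trans_lt hr₂l
  obtain ⟨u, hu, n, a, hn, hn_low, ha_norm, hxa⟩ := exists_tendsto_inv_norm_smul_pow_apply hC_gen
    hA₁_compact hl (tendsto_div_pow_atTop_of_lt_root (fun _ => norm_nonneg _) hr₁ hl hlr₁)
  have hy := tendsto_inv_smul_pow_apply_zero hl
    (tendsto_div_pow_zero_of_root_lt (fun _ => norm_nonneg _) hr₂ hr₂l) hn hn_low u
  have hC_zero : (0 : E) ∈ C := (hC_proper.symm ▸ mem_singleton 0 : (0 : E) ∈ C ∩ -C).1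
  have ha : a = 0 := eq_zero_of_tendsto_of_sub_mem hC_closed hC_proper
    (fun j => hC_smul _ (by positivity) _ (pow_mapsTo hA₁_pos _ hu))
    (fun j => by
      rw [← smul_sub]
      exact hC_smul _ (by positivity) _
        (pow_sub_pow_mapsTo hC_zero hC_add hA₁_pos hA₂_pos hdiff_pos _ hu))
    hxa hy
  simp [ha] at ha_norm

theorem spectral_radius_monotone
    {E : Type*} [NormedAddCommGroup E] [NormedSpace ℝ E] [CompleteSpace E]
    (C : Set E) (hC_closed : IsClosed C)
    (hC_add : ∀ x ∈ C, ∀ y ∈ C, x + y ∈ C)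
    (hC_smul : ∀ t : ℝ, 0 ≤ t → ∀ x ∈ C, t • x ∈ C)
    (hC_proper : C ∩ (-C) = {0})
    (hC_gen : ∀ x : E, ∃ y ∈ C, ∃ z ∈ C, x = y - z)
    (A₁ A₂ : E →L[ℝ] E)
    (hA₁_pos : ∀ x ∈ C, A₁ x ∈ C)
    (hA₂_pos : ∀ x ∈ C, A₂ x ∈ C)
    (hA₁_compact : IsCompactOperator A₁)
    (hA₂_compact : IsCompactOperator A₂)
    (hdiff_pos : ∀ x ∈ C, (A₂ - A₁) x ∈ C)
    (r₁ r₂ : ℝ)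
    (hr₁ : Tendsto (fun k : ℕ => ‖A₁ ^ k‖ ^ ((k : ℝ)⁻¹)) atTop (nhds r₁))
    (hr₂ : Tendsto (fun k : ℕ => ‖A₂ ^ k‖ ^ ((k : ℝ)⁻¹)) atTop (nhds r₂)) :
    r₁ ≤ r₂ :=
  spectral_radius_monotone_general C hC_closed hC_add hC_smul hC_proper hC_gen A₁ A₂ hA₁_pos hA₂_pos
    hA₁_compact hdiff_pos r₁ r₂ hr₁ hr₂
end

section
/- Let F be a finite-dimensional real normed vector space, let C ⊆ F be a closed convex cone which is proper (C ∩ (−C) = {0}) and satisfies C ≠ {0}, and let T : F → F be a linear map with T(C) ⊆ C. Then T has an eigenvector in C: there exist x ∈ C with x ≠ 0 and a real number μ ≥ 0 such that T x = μ • x. -/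
/-!
Fix a continuous functional `f` that is positive on `C ∖ {0}`; it exists because an order unit of
the dual cone dominates a multiple of every functional separating `-x` from `C`. The base
`{x ∈ C | f x = 1}` is then compact. If `S` sends `C ∖ {0}` to order units of `C`, a maximal
Collatz–Wielandt pair `(μ, x)` (with `S x - μ • x ∈ C`) is an eigenpair: otherwise
`y = S x - μ • x ≠ 0`, so `S y` dominates a multiple of `S x`, and the normalised `S x` admits
a larger `μ`. The perturbations `T + ε • f(·) • e` by an order unit `e` are of this kind, and
as `ε → 0` their eigenvectors in the compact base accumulate at an eigenvector of `T`.
-/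

open Set

namespace PointedCone

variable {E : Type*} [AddCommGroup E] [Module ℝ E]

def IsOrderUnit (C : PointedCone ℝ E) (e : E) : Prop :=
  e ∈ C ∧ ∀ w ∈ C, ∃ δ > (0 : ℝ), e - δ • w ∈ C

theorem IsOrderUnit.add_smul {C : PointedCone ℝ E} {e x : E} {r : ℝ} (he : C.IsOrderUnit e)
    (hx : x ∈ C) (hr : 0 < r) : C.IsOrderUnit (x + r • e) := by
  refine ⟨add_mem hx (C.smul_mem hr.le he.1), fun w hw => ?_⟩
  obtain ⟨δ, hδ, hew⟩ := he.2 w hw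
  refine ⟨r * δ, mul_pos hr hδ, ?_⟩
  have h : x + r • e - (r * δ) • w = x + r • (e - δ • w) := by module
  exact h ▸ add_mem hx (C.smul_mem hr.le hew)

theorem exists_isOrderUnit [FiniteDimensional ℝ E] (C : PointedCone ℝ E) :
    ∃ e, C.IsOrderUnit e := by
  obtain ⟨t, htC, -, hspan, -⟩ := Submodule.exists_finset_span_eq_linearIndepOn ℝ (C : Set E)
  refine ⟨∑ i ∈ t, i, sum_mem fun i hi => htC hi, fun w hw => ?_⟩
  have hwt : w ∈ Submodule.span ℝ (t : Set E) := hspan ▸ Submodule.subset_span hw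
  obtain ⟨c, -, rfl⟩ := Submodule.mem_span_finset.mp hwt
  set M := 1 + ∑ i ∈ t, |c i|
  have hM : 0 < M := by positivity
  refine ⟨M⁻¹, inv_pos.mpr hM, ?_⟩
  have h : ∑ i ∈ t, i - M⁻¹ • ∑ i ∈ t, c i • i = ∑ i ∈ t, (1 - M⁻¹ * c i) • i := by
    simp only [Finset.smul_sum, smul_smul, ← Finset.sum_sub_distrib, sub_smul, one_smul]
  rw [h]
  refine sum_mem fun i hi => C.smul_mem ?_ (htC hi)
  have hci : c i < M := (le_abs_self _).trans_lt <| by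
    have := Finset.single_le_sum (fun j _ => abs_nonneg (c j)) hi
    linarith
  rw [sub_nonneg, inv_mul_le_iff₀ hM]
  linarith

end PointedCone

namespace ProperCone

variable {F : Type*} [NormedAddCommGroup F] [NormedSpace ℝ F] {C : ProperCone ℝ F}
  {f : StrongDual ℝ F}

theorem exists_strongDual_pos_of_salient [FiniteDimensional ℝ F]
    (hC : (C : ConvexCone ℝ F).Salient) :
    ∃ f : StrongDual ℝ F, ∀ x ∈ C, x ≠ 0 → 0 < f x := by
  obtain ⟨g, -, hg⟩ :=
    (PointedCone.dual (Module.Dual.eval ℝ F) (C : Set F)).exists_isOrderUnit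
  refine ⟨LinearMap.toContinuousLinearMap g, fun x hx hx0 => ?_⟩
  obtain ⟨h, hhC, hhx⟩ := C.hyperplane_separation_point (hC x hx hx0)
  obtain ⟨δ, hδ, hgh⟩ := hg h.toLinearMap fun y hy => hhC y hy
  have hδh : δ * h x ≤ g x := by simpa using hgh hx
  have : 0 < h x := by simpa using hhx
  simpa using (mul_pos hδ this).trans_le hδh

theorem nonneg_of_forall_pos (hf : ∀ x ∈ C, x ≠ 0 → 0 < f x) {x : F} (hx : x ∈ C) :
    0 ≤ f x := by
  rcases eq_or_ne x 0 with rfl | hx0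
  · simp
  · exact (hf x hx hx0).le

theorem isCompact_base [FiniteDimensional ℝ F] (hf : ∀ x ∈ C, x ≠ 0 → 0 < f x) :
    IsCompact {x ∈ C | f x = 1} := by
  obtain ⟨c, hc, hcf⟩ := ((isCompact_sphere (0 : F) 1).inter_left C.isClosed).exists_forall_le'
    f.continuous.continuousOn fun x hx => hf x hx.1 (by rintro rfl; simpa using hx.2)
  refine (isCompact_closedBall (0 : F) c⁻¹).of_isClosed_subset
    (C.isClosed.inter (isClosed_eq f.continuous continuous_const)) fun x ⟨hxC, hfx⟩ => ?_
  have hx0 : x ≠ 0 := by rintro rfl; simp at hfx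
  have hnx : 0 < ‖x‖ := norm_pos_iff.mpr hx0
  have hu : ‖x‖⁻¹ • x ∈ (C : Set F) ∩ Metric.sphere 0 1 :=
    ⟨C.smul_mem hxC (inv_nonneg.2 hnx.le), by simp [norm_smul, hnx.ne']⟩
  have := hcf _ hu
  rw [map_smul, hfx, smul_eq_mul, mul_one] at this
  rw [mem_closedBall_zero_iff]
  exact (le_inv_comm₀ hc hnx).mp this

theorem nonempty_base (hf : ∀ x ∈ C, x ≠ 0 → 0 < f x) {y : F} (hy : y ∈ C) (hy0 : y ≠ 0) :
    {x ∈ C | f x = 1}.Nonempty :=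
  ⟨(f y)⁻¹ • y, C.smul_mem hy (inv_nonneg.2 (hf y hy hy0).le), by
    simp [(hf y hy hy0).ne']⟩

theorem isCompact_collatzWielandt [FiniteDimensional ℝ F] (hf : ∀ x ∈ C, x ≠ 0 → 0 < f x)
    (S : F →L[ℝ] F) :
    IsCompact {p : ℝ × F | p.2 ∈ {x ∈ C | f x = 1} ∧ 0 ≤ p.1 ∧ S p.2 - p.1 • p.2 ∈ C} := by
  obtain ⟨M, hM⟩ := ((isCompact_base hf).image (f.continuous.comp S.continuous)).bddAbove
  refine ((isCompact_Icc (a := 0) (b := M)).prod (isCompact_base hf)).of_isClosed_subset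
    (((isCompact_base hf).isClosed.preimage continuous_snd).inter
      ((isClosed_le continuous_const continuous_fst).inter
        (C.isClosed.preimage (by fun_prop)))) ?_
  rintro ⟨r, x⟩ ⟨hx, hr, hrx⟩
  have hfrx := nonneg_of_forall_pos hf hrx
  rw [map_sub, map_smul, hx.2, smul_eq_mul, mul_one, sub_nonneg] at hfrx
  exact ⟨⟨hr, hfrx.trans (hM ⟨x, hx, rfl⟩)⟩, hx⟩

theorem exists_eq_smul_of_isOrderUnit [FiniteDimensional ℝ F] (hf : ∀ x ∈ C, x ≠ 0 → 0 < f x)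
    (hK : {x ∈ C | f x = 1}.Nonempty) (S : F →L[ℝ] F)
    (hS : ∀ y ∈ C, y ≠ 0 → (C : PointedCone ℝ F).IsOrderUnit (S y)) :
    ∃ x ∈ {x ∈ C | f x = 1}, S x = f (S x) • x := by
  have hSC : ∀ x ∈ C, S x ∈ C := fun x hx => by
    rcases eq_or_ne x 0 with rfl | hx0
    · simp
    · exact (hS x hx hx0).1
  obtain ⟨x₁, hx₁⟩ := hK
  obtain ⟨⟨μ, x₀⟩, ⟨hx₀, hμ, hy⟩, hmax⟩ :=
    (isCompact_collatzWielandt hf S).exists_isMaxOn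
      ⟨(0, x₁), hx₁, le_rfl, by simp [hSC x₁ hx₁.1]⟩ continuous_fst.continuousOn
  set y := S x₀ - μ • x₀
  rcases eq_or_ne y 0 with hy0 | hy0
  · refine ⟨x₀, hx₀, ?_⟩
    rw [sub_eq_zero.mp hy0, map_smul, hx₀.2, smul_eq_mul, mul_one]
  obtain ⟨δ, hδ, hyδ⟩ := (hS y hy hy0).2 (S x₀) (hSC x₀ hx₀.1)
  set c := f (S x₀)
  have hc : 0 < c := by
    have hfy := hf y hy hy0
    simp only [y, map_sub, map_smul, hx₀.2, smul_eq_mul, mul_one] at hfy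
    linarith
  set z := c⁻¹ • S x₀
  have hz : z ∈ {x ∈ C | f x = 1} :=
    ⟨C.smul_mem (hSC x₀ hx₀.1) (inv_nonneg.2 hc.le), by simp [z, c, hc.ne']⟩
  have hzδ : S z - (μ + δ) • z = c⁻¹ • (S y - δ • S x₀) := by
    simp only [z, y, map_smul, map_sub]
    module
  have := isMaxOn_iff.mp hmax (μ + δ, z)
    ⟨hz, by positivity, hzδ ▸ C.smul_mem hyδ (inv_nonneg.2 hc.le)⟩
  simp only at this
  linarith

end ProperCone

theorem IsCompact.exists_mem_of_forall_mem_Ioc {X : Type*} [TopologicalSpace X] {K : Set X}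
    (hK : IsCompact K) {A : Set (ℝ × X)} (hA : IsClosed A)
    (h : ∀ ε ∈ Ioc (0 : ℝ) 1, ∃ x ∈ K, (ε, x) ∈ A) :
    ∃ x ∈ K, ((0 : ℝ), x) ∈ A := by
  have hB : IsClosed (Prod.fst '' (A ∩ Icc 0 1 ×ˢ K)) :=
    ((isCompact_Icc.prod hK).inter_left hA).image continuous_fst |>.isClosed
  have hIoc : Ioc (0 : ℝ) 1 ⊆ Prod.fst '' (A ∩ Icc 0 1 ×ˢ K) := fun ε hε => by
    obtain ⟨x, hx, hεx⟩ := h ε hε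
    exact ⟨(ε, x), ⟨hεx, Ioc_subset_Icc_self hε, hx⟩, rfl⟩
  obtain ⟨⟨_, x⟩, ⟨h0x, -, hx⟩, rfl⟩ :=
    hB.closure_subset_iff.mpr hIoc
      (show (0 : ℝ) ∈ closure (Ioc 0 1) by simp [closure_Ioc zero_ne_one])
  exact ⟨x, hx, h0x⟩

theorem eigenvector_in_cone_finite_dim
    {F : Type*} [NormedAddCommGroup F] [NormedSpace ℝ F] [FiniteDimensional ℝ F]
    (C : Set F) (hC_closed : IsClosed C)
    (hC_add : ∀ x ∈ C, ∀ y ∈ C, x + y ∈ C)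
    (hC_smul : ∀ t : ℝ, 0 ≤ t → ∀ x ∈ C, t • x ∈ C)
    (hC_proper : C ∩ (-C) = {0})
    (hC_ne : C ≠ {0})
    (T : F →ₗ[ℝ] F) (hT : ∀ x ∈ C, T x ∈ C) :
    ∃ x ∈ C, x ≠ 0 ∧ ∃ μ : ℝ, 0 ≤ μ ∧ T x = μ • x := by
  have h0 : (0 : F) ∈ C := (hC_proper.symm ▸ rfl : (0 : F) ∈ C ∩ -C).1
  let C' : ProperCone ℝ F :=
    { carrier := C
      add_mem' := fun hx hy => hC_add _ hx _ hy
      zero_mem' := h0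
      smul_mem' := fun t x hx => hC_smul t t.2 x hx
      isClosed' := hC_closed }
  obtain ⟨f, hf⟩ := C'.exists_strongDual_pos_of_salient
    ((PointedCone.salient_iff_inter_neg_eq_singleton _).mpr hC_proper)
  obtain ⟨e, he⟩ := (C' : PointedCone ℝ F).exists_isOrderUnit
  obtain ⟨y, hy, hy0⟩ : ∃ y ∈ C, y ≠ 0 := by
    by_contra! h
    exact hC_ne (eq_singleton_iff_unique_mem.mpr ⟨h0, h⟩)
  let T' := LinearMap.toContinuousLinearMap T
  have hperturbed : ∀ ε ∈ Ioc (0 : ℝ) 1, ∃ x ∈ {x ∈ C' | f x = 1},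
      (ε, x) ∈ {p : ℝ × F | T' p.2 + p.1 • e = f (T' p.2 + p.1 • e) • p.2} := by
    rintro ε ⟨hε, -⟩
    obtain ⟨x, hx, hSx⟩ := C'.exists_eq_smul_of_isOrderUnit hf (C'.nonempty_base hf hy hy0)
      (T' + ε • f.smulRight e) fun z hz hz0 => by
        simpa [T', smul_smul] using he.add_smul (hT z hz) (mul_pos hε (hf z hz hz0))
    exact ⟨x, hx, by simpa [hx.2] using hSx⟩
  obtain ⟨x, ⟨hxC, hfx⟩, hTx⟩ := (C'.isCompact_base hf).exists_mem_of_forall_mem_Ioc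
    (isClosed_eq (by fun_prop) (by fun_prop)) hperturbed
  refine ⟨x, hxC, by rintro rfl; simp at hfx, f (T x), C'.nonneg_of_forall_pos hf (hT x hxC), ?_⟩
  simpa [T'] using hTx
end
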